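/- arXiv:2407.04419 — 5 statements merged into one kernel-verified Lean document; each statement's English description precedes it below -/
import Mathlib

section
/- Let Ω be a finite set and let G₁, …, G_r be subgroups of Sym(Ω) whose supports Ω₁, …, Ω_r (the sets of points moved by some element of the respective subgroup) are pairwise disjoint. Let G be the subgroup of Sym(Ω) generated by G₁ ∪ … ∪ G_r. Suppose that for each i ∈ {1, …, r}, Sᵢ is a complete symmetry breaking set for the action of Gᵢ on assignments Ωᵢ → Bool (where a permutation acts by permuting positions). Then the set S := {θ : Ω → Bool | for all i, the restriction of θ to Ωᵢ belongs to Sᵢ} is a complete symmetry breaking set for the action of G on assignments Ω → Bool. -/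
/-- SBPs for a disjoint direct decomposition: if `G₁, …, G_r ≤ Sym(Ω)`
have pairwise disjoint supports and each `Sᵢ` is a complete symmetry breaking set for
the action of `Gᵢ` on assignments `suppᵢ → Bool`, then the set of assignments
`θ : Ω → Bool` all of whose restrictions lie in the respective `Sᵢ` is a complete
symmetry breaking set for the group generated by the `Gᵢ`. -/
theorem disjoint_direct_decomposition_sbp {Ω : Type*} [Fintype Ω] [DecidableEq Ω]
    (r : ℕ) (G : Fin r → Subgroup (Equiv.Perm Ω))
    (supp : Fin r → Set Ω)
    (hsupp : ∀ i, supp i = {ω : Ω | ∃ σ ∈ G i, σ ω ≠ ω})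
    (hdisj : ∀ i j : Fin r, i ≠ j → Disjoint (supp i) (supp j))
    (Gfull : Subgroup (Equiv.Perm Ω))
    (hG : Gfull = Subgroup.closure (⋃ i, (G i : Set (Equiv.Perm Ω))))
    (S : ∀ i : Fin r, Set ((supp i) → Bool))
    (hS : ∀ i : Fin r, ∀ θ : (supp i) → Bool, ∃! θ' : (supp i) → Bool,
      θ' ∈ S i ∧ ∃ σ ∈ G i, ∀ ω ω' : (supp i),
        σ (ω : Ω) = (ω' : Ω) → θ' ω' = θ ω) :
    ∀ θ : Ω → Bool, ∃! θ' : Ω → Bool,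
      θ' ∈ {η : Ω → Bool | ∀ i : Fin r, (fun ω : (supp i) => η ω) ∈ S i} ∧
      ∃ σ ∈ Gfull, ∀ ω : Ω, θ' (σ ω) = θ ω := by
  classical
  intro θ
  -- A: elements of G i fix points outside supp i
  have fixA : ∀ i (σ : Equiv.Perm Ω), σ ∈ G i → ∀ ω, ω ∉ supp i → σ ω = ω := by
    intro i σ hσ ω hω
    by_contra h
    exact hω (by rw [hsupp i]; exact ⟨σ, hσ, h⟩)
  -- B: elements of G i map supp i into supp i
  have mapsB : ∀ i (σ : Equiv.Perm Ω), σ ∈ G i → ∀ ω ∈ supp i, σ ω ∈ supp i := by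
    intro i σ hσ ω hω
    by_cases h : σ ω = ω
    · rwa [h]
    · rw [hsupp i]
      refine ⟨σ⁻¹, (G i).inv_mem hσ, ?_⟩
      simp only [Equiv.Perm.inv_def, Equiv.symm_apply_apply]
      exact fun hc => h hc.symm
  -- uniqueness of the support containing a point
  have uniqI : ∀ {i j : Fin r} {ω : Ω}, ω ∈ supp i → ω ∈ supp j → i = j := by
    intro i j ω hi hj
    by_contra hne
    exact Set.disjoint_left.mp (hdisj i j hne) hi hj
  -- C: elements of Gfull fix points outside all supports
  have fixC : ∀ σ ∈ Gfull, ∀ ω, (∀ i, ω ∉ supp i) → σ ω = ω := by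
    intro σ hσ
    rw [hG] at hσ
    induction hσ using Subgroup.closure_induction with
    | mem x hx =>
      intro ω hω
      rcases Set.mem_iUnion.mp hx with ⟨i, hi⟩
      exact fixA i x hi ω (hω i)
    | one => intro ω _; rfl
    | mul x y hx hy px py =>
      intro ω hω
      rw [Equiv.Perm.mul_apply, py ω hω, px ω hω]
    | inv x hx px =>
      intro ω hω
      have h1 := px ω hω
      rw [Equiv.Perm.inv_def, Equiv.symm_apply_eq, h1]
  -- D: elements of Gfull agree with some element of G i on supp i
  have agreeD : ∀ σ ∈ Gfull, ∀ i, ∃ τ ∈ G i, ∀ ω ∈ supp i, σ ω = τ ω := by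
    intro σ hσ
    rw [hG] at hσ
    induction hσ using Subgroup.closure_induction with
    | mem x hx =>
      intro i
      rcases Set.mem_iUnion.mp hx with ⟨j, hj⟩
      by_cases hij : j = i
      · subst hij; exact ⟨x, hj, fun ω _ => rfl⟩
      · refine ⟨1, (G i).one_mem, fun ω hω => ?_⟩
        have : ω ∉ supp j := fun hc => hij (uniqI hc hω)
        simp [fixA j x hj ω this]
    | one => intro i; exact ⟨1, (G i).one_mem, fun ω _ => rfl⟩
    | mul x y hx hy px py =>
      intro i
      obtain ⟨τx, hτx, hax⟩ := px i
      obtain ⟨τy, hτy, hay⟩ := py i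
      refine ⟨τx * τy, (G i).mul_mem hτx hτy, fun ω hω => ?_⟩
      have h1 : y ω = τy ω := hay ω hω
      have h2 : τy ω ∈ supp i := mapsB i τy hτy ω hω
      simp only [Equiv.Perm.mul_apply, h1]
      exact hax _ h2
    | inv x hx px =>
      intro i
      obtain ⟨τ, hτ, ha⟩ := px i
      refine ⟨τ⁻¹, (G i).inv_mem hτ, fun ω hω => ?_⟩
      have h2 : τ⁻¹ ω ∈ supp i := mapsB i τ⁻¹ ((G i).inv_mem hτ) ω hω
      have h3 : x (τ⁻¹ ω) = ω := by rw [ha _ h2, Equiv.Perm.inv_def, Equiv.apply_symm_apply]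
      rw [Equiv.Perm.inv_def, Equiv.symm_apply_eq, h3]
  -- choose canonical representatives and permutations
  have hS' : ∀ i : Fin r, ∃ θi : (supp i) → Bool,
      (θi ∈ S i ∧ ∃ σ ∈ G i, ∀ ω ω' : (supp i),
        σ (ω : Ω) = (ω' : Ω) → θi ω' = θ ω) ∧
      ∀ y : (supp i) → Bool,
        (y ∈ S i ∧ ∃ σ ∈ G i, ∀ ω ω' : (supp i),
          σ (ω : Ω) = (ω' : Ω) → y ω' = θ ω) → y = θi :=
    fun i => hS i (fun ω : supp i => θ ω)
  choose F hFspec using hS'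
  have hFS : ∀ i, F i ∈ S i := fun i => (hFspec i).1.1
  have huniq : ∀ i (y : (supp i) → Bool),
      (y ∈ S i ∧ ∃ σ ∈ G i, ∀ ω ω' : (supp i),
        σ (ω : Ω) = (ω' : Ω) → y ω' = θ ω) → y = F i :=
    fun i => (hFspec i).2
  choose σs σmem σprop using fun i => (hFspec i).1.2
  -- define θ'
  set θ' : Ω → Bool :=
    fun ω => if h : ∃ i, ω ∈ supp i then F h.choose ⟨ω, h.choose_spec⟩ else θ ω with hθ'
  have θ'eq : ∀ (i : Fin r) (ω : Ω) (hω : ω ∈ supp i), θ' ω = F i ⟨ω, hω⟩ := by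
    intro i ω hω
    have h : ∃ i, ω ∈ supp i := ⟨i, hω⟩
    rw [hθ']
    simp only [dif_pos h]
    have hji : h.choose = i := uniqI h.choose_spec hω
    subst hji
    rfl
  have θ'out : ∀ ω : Ω, (∀ i, ω ∉ supp i) → θ' ω = θ ω := by
    intro ω hω
    rw [hθ']
    have h : ¬ ∃ i, ω ∈ supp i := fun ⟨i, hi⟩ => hω i hi
    simp [h]
  have restr : ∀ i : Fin r, (fun ω : supp i => θ' ω) = F i := by
    intro i; funext ω; exact θ'eq i ω ω.2
  -- product formula over a duplicate-free list
  have prodE : ∀ (l : List (Fin r)), l.Nodup → ∀ (i : Fin r) (ω : Ω), ω ∈ supp i →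
      (l.map σs).prod ω = if i ∈ l then σs i ω else ω := by
    intro l
    induction l with
    | nil => intro _ i ω hω; simp
    | cons a t ih =>
      intro hnd i ω hω
      obtain ⟨hat, hndt⟩ := List.nodup_cons.mp hnd
      rw [List.map_cons, List.prod_cons, Equiv.Perm.mul_apply, ih hndt i ω hω]
      by_cases hi : i ∈ t
      · rw [if_pos hi, if_pos (List.mem_cons_of_mem a hi)]
        have hmem : σs i ω ∈ supp i := mapsB i (σs i) (σmem i) ω hω
        have hia : a ≠ i := fun hc => hat (hc ▸ hi)
        exact fixA a (σs a) (σmem a) _ (fun hc => hia (uniqI hc hmem))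
      · rw [if_neg hi]
        by_cases hai : a = i
        · subst hai; rw [if_pos (List.mem_cons_self (a := a) (l := t))]
        · rw [if_neg (fun hc => (List.mem_cons.mp hc).elim (fun h => hai h.symm) hi)]
          exact fixA a (σs a) (σmem a) ω (fun hc => hai (uniqI hc hω))
  set σ : Equiv.Perm Ω := ((List.finRange r).map σs).prod with hσdef
  have σGfull : σ ∈ Gfull := by
    rw [hG, hσdef]
    refine Subgroup.list_prod_mem _ ?_
    intro x hx
    rcases List.mem_map.mp hx with ⟨j, _, rfl⟩
    exact Subgroup.subset_closure (Set.mem_iUnion.mpr ⟨j, σmem j⟩)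
  refine ⟨θ', ⟨fun i => by rw [restr i]; exact hFS i, σ, σGfull, ?_⟩, ?_⟩
  · intro ω
    by_cases h : ∃ i, ω ∈ supp i
    · obtain ⟨i, hi⟩ := h
      have hσω : σ ω = σs i ω := by
        rw [hσdef, prodE (List.finRange r) (List.nodup_finRange r) i ω hi,
          if_pos (List.mem_finRange i)]
      have hmem : σs i ω ∈ supp i := mapsB i (σs i) (σmem i) ω hi
      rw [hσω, θ'eq i _ hmem]
      exact σprop i ⟨ω, hi⟩ ⟨σs i ω, hmem⟩ rfl
    · push_neg at h
      rw [fixC σ σGfull ω h]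
      exact θ'out ω h
  · rintro θ'' ⟨hθ''S, σ'', hσ''G, hσ''⟩
    funext ω
    by_cases h : ∃ i, ω ∈ supp i
    · obtain ⟨i, hi⟩ := h
      obtain ⟨τ, hτ, hagree⟩ := agreeD σ'' hσ''G i
      have heq : (fun ω : supp i => θ'' ω) = F i := by
        refine huniq i _ ⟨hθ''S i, τ, hτ, fun ω ω' hτω => ?_⟩
        have hσω : σ'' (ω : Ω) = (ω' : Ω) := by rw [hagree ω ω.2, hτω]
        rw [← hσω]
        exact hσ'' ω
      have hpt := congrFun heq ⟨ω, hi⟩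
      simp only at hpt
      rw [hpt, θ'eq i ω hi]
    · push_neg at h
      rw [θ'out ω h, ← hσ'' ω, fixC σ'' hσ''G ω h]
end

section
/- Let n, m be positive integers and let G be a subgroup of Sym(Fin n). Consider assignments θ : Fin n → Fin m → Bool, viewed as n × m matrices with columns θ_j := (i ↦ θ i j) for j ∈ Fin m. Define the wreath equivalence: θ ≈ θ' if and only if there exist a permutation h of Fin m and a family (g_j)_{j ∈ Fin m} of elements of G such that θ' is obtained from θ by first applying g_j to the positions of column j for each j independently, and then permuting the columns according to h (this is exactly the orbit equivalence of the imprimitive action of the wreath product G ≀ Sym(Fin m) on Fin n × Fin m). Suppose S is a complete symmetry breaking set for the action of G on assignments Fin n → Bool. Then the set of all θ such that every column θ_j belongs to S and the columns are nondecreasing in the lexicographic order (θ_0 ≤_lex θ_1 ≤_lex … ≤_lex θ_{m−1}) contains exactly one element of each wreath equivalence class. -/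
/-- The lexicographic order on `Fin n → Bool` induced by the natural order on `Fin n`
and `false < true`. -/
def lexLE {n : ℕ} (θ θ' : Fin n → Bool) : Prop :=
  θ = θ' ∨ ∃ i : Fin n, θ i < θ' i ∧ ∀ k : Fin n, k < i → θ k = θ' k

noncomputable instance lexBoolLO (n : ℕ) : LinearOrder (Lex (Fin n → Bool)) :=
  Pi.Lex.linearOrder

lemma lexLE_iff {n : ℕ} (a b : Fin n → Bool) : lexLE a b ↔ toLex a ≤ toLex b := by
  rw [le_iff_lt_or_eq]
  constructor
  · rintro (rfl | ⟨i, hlt, hk⟩)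
    · exact Or.inr rfl
    · exact Or.inl ⟨i, fun j hj => hk j hj, hlt⟩
  · rintro (⟨i, hk, hlt⟩ | h)
    · exact Or.inr ⟨i, hlt, fun k hk' => hk k hk'⟩
    · exact Or.inl (congrArg ofLex h)

/-- Lifting a complete symmetry breaking set `S` for `G ≤ Sym(Fin n)`
to the wreath product `G ≀ Sym(Fin m)`: the set of matrices all of whose columns lie in
`S` and whose columns are lexicographically nondecreasing contains exactly one element
of each orbit of the imprimitive wreath action. -/
theorem wreath_with_sym_sbp (n m : ℕ) (hn : 0 < n) (hm : 0 < m)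
    (G : Subgroup (Equiv.Perm (Fin n))) (S : Set (Fin n → Bool))
    (hS : ∀ θ : Fin n → Bool, ∃! θ' : Fin n → Bool,
      θ' ∈ S ∧ ∃ σ ∈ G, ∀ i : Fin n, θ' (σ i) = θ i) :
    ∀ θ : Fin n → Fin m → Bool, ∃! θ' : Fin n → Fin m → Bool,
      ((∀ j : Fin m, (fun i => θ' i j) ∈ S) ∧
        (∀ j j' : Fin m, j ≤ j' → lexLE (fun i => θ' i j) (fun i => θ' i j'))) ∧
      (∃ (h : Equiv.Perm (Fin m)) (g : Fin m → Equiv.Perm (Fin n)),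
        (∀ j : Fin m, g j ∈ G) ∧ ∀ (i : Fin n) (j : Fin m), θ' (g j i) (h j) = θ i j) := by
  intro θ
  classical
  -- canonical representative of each column
  choose c hcS σ hσG hσ using fun j => (hS (fun i => θ i j)).exists
  set f : Fin m → Lex (Fin n → Bool) := fun j => toLex (c j) with hf
  set τ : Equiv.Perm (Fin m) := Tuple.sort f with hτ
  refine ⟨fun i j => ofLex (f (τ j)) i, ⟨⟨fun j => hcS (τ j), ?_⟩, τ.symm, fun j => σ j,
      fun j => hσG j, ?_⟩, ?_⟩
  · intro j j' hjj'
    rw [lexLE_iff]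
    exact Tuple.monotone_sort f hjj'
  · intro i j
    simp only [Equiv.apply_symm_apply]
    exact hσ j i
  · rintro η ⟨⟨hηS, hηsort⟩, h, g, hgG, hrel⟩
    have hcol : ∀ j : Fin m, (fun i => η i (h j)) = c j := fun j =>
      (hS (fun i => θ i j)).unique ⟨hηS (h j), g j, hgG j, fun i => hrel i j⟩
        ⟨hcS j, σ j, hσG j, hσ j⟩
    set fη : Fin m → Lex (Fin n → Bool) := fun j => toLex (fun i => η i j) with hfη
    have hfηh : fη = f ∘ ⇑h.symm := by
      funext j
      have := hcol (h.symm j)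
      simp only [hfη, hf, Function.comp_apply]
      rw [← this, h.apply_symm_apply]
    have hmono1 : Monotone (f ∘ ⇑h.symm) := by
      rw [← hfηh]
      intro j j' hjj'
      exact (lexLE_iff _ _).mp (hηsort j j' hjj')
    have hmono2 : Monotone (f ∘ ⇑τ) := Tuple.monotone_sort f
    have key : f ∘ ⇑h.symm = f ∘ ⇑τ := Tuple.unique_monotone hmono1 hmono2
    funext i j
    have : fη j = f (τ j) := by rw [hfηh]; exact congrFun key j
    exact congrFun (congrArg ofLex this) i
end

section
/- Let n, m be positive integers. Consider assignments θ : Fin n → Fin m → Bool, viewed as n × m matrices with columns θ_j := (i ↦ θ i j). Define θ ≈ θ' if and only if θ' can be obtained from θ by independently permuting the entries within each column and then permuting the columns (this is the orbit equivalence of the imprimitive action of the wreath product Sym(Fin n) ≀ Sym(Fin m) on Fin n × Fin m). Then the set of all θ such that every column θ_j is monotone nondecreasing (with false < true) and the columns are nondecreasing in the lexicographic order (θ_0 ≤_lex θ_1 ≤_lex … ≤_lex θ_{m−1}) contains exactly one element of each equivalence class. -/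
namespace SbpAux

def cnt {n : ℕ} (v : Fin n → Bool) : ℕ :=
  (Finset.univ.filter (fun i => v i = true)).card

lemma cnt_le {n : ℕ} (v : Fin n → Bool) : cnt v ≤ n := by
  classical
  calc cnt v ≤ (Finset.univ : Finset (Fin n)).card := Finset.card_filter_le _ _
  _ = n := by simp

lemma cnt_comp {n : ℕ} (v : Fin n → Bool) (g : Equiv.Perm (Fin n)) :
    cnt (fun i => v (g i)) = cnt v := by
  classical
  unfold cnt
  apply Finset.card_bij (fun i _ => g i)
  · intro a ha; simp at ha ⊢; exact ha
  · intro a ha b hb hab; exact g.injective hab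
  · intro b hb; exact ⟨g.symm b, by simp at hb ⊢; exact hb, by simp⟩

lemma monotone_eq {n : ℕ} {v : Fin n → Bool} (hv : Monotone v) (i : Fin n) :
    v i = decide (n - cnt v ≤ i.val) := by
  classical
  have key : v i = true ↔ n - cnt v ≤ i.val := by
    constructor
    · intro h
      have hsub : Finset.Ici i ⊆ Finset.univ.filter (fun j => v j = true) := by
        intro j hj
        simp only [Finset.mem_Ici] at hj
        simp only [Finset.mem_filter, Finset.mem_univ, true_and]
        have := hv hj
        rw [h] at this
        exact le_antisymm (by simp : v j ≤ true) this
      have := Finset.card_le_card hsub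
      rw [Fin.card_Ici] at this
      have := i.isLt
      unfold cnt
      omega
    · intro h
      by_contra hf
      have hf' : v i = false := by simpa using hf
      have hsub : Finset.univ.filter (fun j => v j = true) ⊆ Finset.Ioi i := by
        intro j hj
        simp only [Finset.mem_filter, Finset.mem_univ, true_and] at hj
        simp only [Finset.mem_Ioi]
        by_contra hle
        push_neg at hle
        have := hv hle
        rw [hj, hf'] at this
        exact absurd this (by simp)
      have hc := Finset.card_le_card hsub
      rw [Fin.card_Ioi] at hc
      have := i.isLt
      unfold cnt at h
      omega
  by_cases h : n - cnt v ≤ i.val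
  · simp [h, key.mpr h]
  · simp only [h, decide_false]
    by_contra hne
    have : v i = true := by revert hne; cases v i <;> simp
    exact h (key.mp this)

lemma colOf_monotone (n k : ℕ) : Monotone (fun i : Fin n => decide (n - k ≤ i.val)) := by
  intro a b hab
  rw [Bool.le_iff_imp]
  simp only [decide_eq_true_eq]
  intro h
  exact h.trans hab

lemma lexLE_colOf {n : ℕ} {k l : ℕ} (hl : l ≤ n) (hkl : k ≤ l) :
    lexLE (fun i : Fin n => decide (n - k ≤ i.val)) (fun i => decide (n - l ≤ i.val)) := by
  rcases eq_or_lt_of_le hkl with rfl | hlt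
  · exact Or.inl rfl
  · refine Or.inr ⟨⟨n - l, by omega⟩, ?_, ?_⟩
    · simp only [show ¬ (n - k ≤ n - l) by omega, show n - l ≤ n - l from le_rfl]
      simp [Bool.lt_iff]
    · intro j hj
      simp only [Fin.lt_def] at hj
      have h1 : ¬ (n - k ≤ j.val) := by omega
      have h2 : ¬ (n - l ≤ j.val) := by omega
      simp [h1, h2]

lemma le_of_lexLE_colOf {n : ℕ} {k l : ℕ} (hk : k ≤ n) (hl : l ≤ n)
    (h : lexLE (fun i : Fin n => decide (n - k ≤ i.val)) (fun i => decide (n - l ≤ i.val))) :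
    k ≤ l := by
  by_contra hlt
  push_neg at hlt
  rcases h with he | ⟨i, hi, _⟩
  · have := congrFun he ⟨n - k, by omega⟩
    simp only [decide_eq_decide] at this
    omega
  · rw [Bool.lt_iff] at hi
    have h1 : ¬ (n - k ≤ i.val) := by simpa using hi.1
    have h2 : n - l ≤ i.val := by simpa using hi.2
    omega

lemma exists_perm_to_colOf {n : ℕ} (v : Fin n → Bool) :
    ∃ g : Equiv.Perm (Fin n), ∀ i, decide (n - cnt v ≤ (g i).val) = v i := by
  refine ⟨(Tuple.sort v).symm, fun i => ?_⟩
  have hm : Monotone (v ∘ Tuple.sort v) := Tuple.monotone_sort v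
  have h2 := monotone_eq hm ((Tuple.sort v).symm i)
  rw [show cnt (v ∘ Tuple.sort v) = cnt v from cnt_comp v _] at h2
  simpa using h2.symm

end SbpAux

open SbpAux in
/-- Complete symmetry breaking for `Sym(Fin n) ≀ Sym(Fin m)` in its
imprimitive action on `n × m` Boolean matrices: every orbit (under independently
permuting entries within columns and permuting columns) contains exactly one matrix
with monotone nondecreasing columns that are sorted lexicographically. -/
theorem sym_wr_sym_sbp (n m : ℕ) (hn : 0 < n) (hm : 0 < m) :
    ∀ θ : Fin n → Fin m → Bool, ∃! θ' : Fin n → Fin m → Bool,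
      ((∀ j : Fin m, Monotone (fun i => θ' i j)) ∧
        (∀ j j' : Fin m, j ≤ j' → lexLE (fun i => θ' i j) (fun i => θ' i j'))) ∧
      (∃ (h : Equiv.Perm (Fin m)) (g : Fin m → Equiv.Perm (Fin n)),
        ∀ (i : Fin n) (j : Fin m), θ' (g j i) (h j) = θ i j) := by
  intro θ
  classical
  set c : Fin m → ℕ := fun j => cnt (fun i => θ i j) with hc
  set σ : Equiv.Perm (Fin m) := Tuple.sort c with hσ
  have hcσ : Monotone (c ∘ σ) := Tuple.monotone_sort c
  refine ⟨fun i j => decide (n - c (σ j) ≤ i.val), ⟨⟨?_, ?_⟩, ?_⟩, ?_⟩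
  · intro j; exact colOf_monotone n (c (σ j))
  · intro j j' hjj'
    exact lexLE_colOf (cnt_le _) (hcσ hjj')
  · -- existence of permutations
    refine ⟨σ.symm, fun j => Classical.choose (exists_perm_to_colOf (fun i => θ i j)), fun i j => ?_⟩
    have hg := Classical.choose_spec (exists_perm_to_colOf (fun i => θ i j)) i
    simpa [Equiv.apply_symm_apply] using hg
  · -- uniqueness
    rintro θ'' ⟨⟨hmono, hlex⟩, h, g, hrel⟩
    set d : Fin m → ℕ := fun j => cnt (fun i => θ'' i j) with hd
    have hcol : ∀ j i, θ'' i j = decide (n - d j ≤ i.val) := fun j i => monotone_eq (hmono j) i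
    have hdmono : Monotone d := by
      intro j j' hjj'
      have := hlex j j' hjj'
      rw [funext (hcol j), funext (hcol j')] at this
      exact le_of_lexLE_colOf (cnt_le _) (cnt_le _) this
    have hdh : ∀ j, d (h j) = c j := by
      intro j
      have : (fun i => θ'' (g j i) (h j)) = (fun i => θ i j) := funext (fun i => hrel i j)
      calc d (h j) = cnt (fun i => θ'' (g j i) (h j)) := (cnt_comp _ _).symm
      _ = c j := by rw [this]
    -- d ∘ (h ∘ σ... ) : we have c = d ∘ h, so c ∘ σ = d ∘ (h... )
    have hkey : d = c ∘ σ := by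
      have h1 : Monotone (d ∘ (Equiv.trans σ h)) := by
        have : (d ∘ (Equiv.trans σ h)) = c ∘ σ := by
          funext j; simp [Equiv.trans_apply, hdh (σ j)]
        rw [this]; exact hcσ
      have h2 : Monotone (d ∘ (1 : Equiv.Perm (Fin m))) := by simpa using hdmono
      have := Tuple.unique_monotone h2 h1
      have h3 : (d ∘ (Equiv.trans σ h)) = c ∘ σ := by
        funext j; simp [Equiv.trans_apply, hdh (σ j)]
      rw [h3] at this
      simpa using this
    funext i j
    rw [hcol j i, hkey]
    simp
end

section
/- Let G ≤ Sym(Fin n) and H ≤ Sym(Fin m) be permutation groups. For θ : Fin n → Fin m → Bool, write θ_j : Fin n → Bool for its j-th column (θ_j(i) = θ i j) and c_i(θ) : Fin m → Bool for its i-th row string (c_i(θ)(j) = θ i j). For i with 0 ≤ i ≤ n, let P_i(θ) be the partition of Fin m in which j and j' lie in the same block if and only if c_k(θ)(j) = c_k(θ)(j') for all k < i (so P_0(θ) is the trivial partition with the single block Fin m). For a partition P of Fin m, the partition stabilizer Stab_H(P) is the subgroup of all h ∈ H that map every block of P to itself. Define the wreath equivalence: θ ≈ θ' if and only if θ' can be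 obtained from θ by applying some element of G within each column independently and then permuting the columns by some element of H (the orbit equivalence of the imprimitive action of G ≀ H on Fin n × Fin m). Suppose S_G is a complete symmetry breaking set for the action of G on assignments Fin n → Bool, and suppose Φ assigns to every partition P of Fin m a complete symmetry breaking set Φ(P) for the action of Stab_H(P) on assignments Fin m → Bool. Then the set A of all θ such that (i) every column θ_j belongs to S_G, and (ii) for every i ∈ {1, …, n}, the row string c_i(θ) belongs to Φ(P_{i−1}(θ)), contains exactly one element of each wreath equivalence class. -/
namespace WreathSBP

variable {n m : ℕ}

/-- Partition (as an equivalence relation) of the columns given by rows `k < i`. -/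
def Pt (θ : Fin n → Fin m → Bool) (i : Fin n) : Fin m → Fin m → Prop :=
  fun j j' => ∀ k : Fin n, k < i → θ k j = θ k j'

lemma Pt_equiv (θ : Fin n → Fin m → Bool) (i : Fin n) : Equivalence (Pt θ i) :=
  ⟨fun _ _ _ => rfl, fun h k hk => (h k hk).symm,
   fun h1 h2 k hk => (h1 k hk).trans (h2 k hk)⟩

/-- The imprimitive wreath-product orbit relation. -/
def Rel (G : Subgroup (Equiv.Perm (Fin n))) (H : Subgroup (Equiv.Perm (Fin m)))
    (θ' θ : Fin n → Fin m → Bool) : Prop :=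
  ∃ (h : Equiv.Perm (Fin m)) (g : Fin m → Equiv.Perm (Fin n)),
    h ∈ H ∧ (∀ j, g j ∈ G) ∧ ∀ i j, θ' (g j i) (h j) = θ i j

variable {G : Subgroup (Equiv.Perm (Fin n))} {H : Subgroup (Equiv.Perm (Fin m))}

lemma Rel.symm {θ' θ : Fin n → Fin m → Bool} (hr : Rel G H θ' θ) : Rel G H θ θ' := by
  obtain ⟨h0, g0, hH, hG, he⟩ := hr
  refine ⟨h0⁻¹, fun j => (g0 (h0⁻¹ j))⁻¹, H.inv_mem hH, fun j => G.inv_mem (hG _), ?_⟩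
  intro i j
  have := he ((g0 (h0⁻¹ j))⁻¹ i) (h0⁻¹ j)
  simpa using this.symm

lemma Rel.trans {a b c : Fin n → Fin m → Bool} (h1 : Rel G H a b) (h2 : Rel G H b c) :
    Rel G H a c := by
  obtain ⟨h0, g0, hH0, hG0, he0⟩ := h1
  obtain ⟨h1', g1, hH1, hG1, he1⟩ := h2
  refine ⟨h0 * h1', fun j => g0 (h1' j) * g1 j, H.mul_mem hH0 hH1,
    fun j => G.mul_mem (hG0 _) (hG1 _), ?_⟩
  intro i j
  have := he0 (g1 j i) (h1' j)
  simpa [Equiv.Perm.mul_apply] using this.trans (he1 i j)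

end WreathSBP

open WreathSBP

/-- Complete symmetry breaking for a general wreath product `G ≀ H`:
given a complete symmetry breaking set `S` for `G ≤ Sym(Fin n)` and, for every
partition `P` of `Fin m` (represented by an equivalence relation), a complete symmetry
breaking set `Φ P` for the partition stabilizer of `P` in `H ≤ Sym(Fin m)`, the set of
matrices whose columns all lie in `S` and whose `i`-th row string lies in
`Φ (P_{i-1})` (where `P_{i-1}` identifies columns agreeing on all rows `k < i`)
contains exactly one element of each orbit of the imprimitive wreath action. -/
theorem wreath_product_sbp (n m : ℕ)
    (G : Subgroup (Equiv.Perm (Fin n))) (H : Subgroup (Equiv.Perm (Fin m)))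
    (S : Set (Fin n → Bool))
    (hS : ∀ θ : Fin n → Bool, ∃! θ' : Fin n → Bool,
      θ' ∈ S ∧ ∃ σ ∈ G, ∀ i : Fin n, θ' (σ i) = θ i)
    (Φ : (Fin m → Fin m → Prop) → Set (Fin m → Bool))
    (hΦ : ∀ P : Fin m → Fin m → Prop, Equivalence P →
      ∀ c : Fin m → Bool, ∃! c' : Fin m → Bool,
        c' ∈ Φ P ∧ ∃ σ : Equiv.Perm (Fin m), σ ∈ H ∧ (∀ j : Fin m, P (σ j) j) ∧
          ∀ j : Fin m, c' (σ j) = c j) :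
    ∀ θ : Fin n → Fin m → Bool, ∃! θ' : Fin n → Fin m → Bool,
      ((∀ j : Fin m, (fun i => θ' i j) ∈ S) ∧
        (∀ i : Fin n, (fun j => θ' i j) ∈
          Φ (fun j j' => ∀ k : Fin n, k < i → θ' k j = θ' k j'))) ∧
      (∃ (h : Equiv.Perm (Fin m)) (g : Fin m → Equiv.Perm (Fin n)),
        h ∈ H ∧ (∀ j : Fin m, g j ∈ G) ∧
        ∀ (i : Fin n) (j : Fin m), θ' (g j i) (h j) = θ i j) := by
  intro θ
  -- If two related matrices both have all columns in `S`, the column permutation alone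
  -- relates them.
  have colstep : ∀ θ'' θ' : Fin n → Fin m → Bool, Rel G H θ'' θ' →
      (∀ j, (fun i => θ' i j) ∈ S) → (∀ j, (fun i => θ'' i j) ∈ S) →
      ∃ h : Equiv.Perm (Fin m), h ∈ H ∧ ∀ i j, θ'' i (h j) = θ' i j := by
    rintro θ'' θ' ⟨h0, g0, hH, hG, he⟩ hS1 hS2
    refine ⟨h0, hH, fun i j => ?_⟩
    have h1 : (fun i => θ' i j) ∈ S ∧
        ∃ σ ∈ G, ∀ i : Fin n, (fun i => θ' i j) (σ i) = θ' i j :=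
      ⟨hS1 j, 1, one_mem _, fun _ => rfl⟩
    have h2 : (fun i => θ'' i (h0 j)) ∈ S ∧
        ∃ σ ∈ G, ∀ i : Fin n, (fun i' => θ'' i' (h0 j)) (σ i) = θ' i j :=
      ⟨hS2 (h0 j), g0 j, hG j, fun i => he i j⟩
    exact congrFun ((hS (fun i => θ' i j)).unique h2 h1) i
  -- Existence: canonicalize columns, then rows one by one.
  have exist : ∀ N : ℕ, ∃ θc : Fin n → Fin m → Bool,
      Rel G H θc θ ∧ (∀ j, (fun i => θc i j) ∈ S) ∧
      ∀ i : Fin n, (i : ℕ) < N → (fun j => θc i j) ∈ Φ (Pt θc i) := by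
    intro N
    induction N with
    | zero =>
      have hc : ∀ j, Classical.choose (hS (fun i => θ i j)) ∈ S ∧
          ∃ σ ∈ G, ∀ i : Fin n, Classical.choose (hS (fun i => θ i j)) (σ i) = θ i j :=
        fun j => (Classical.choose_spec (hS (fun i => θ i j))).1
      choose σf hσG hσe using fun j => (hc j).2
      refine ⟨fun i j => Classical.choose (hS (fun i => θ i j)) i,
        ⟨1, σf, one_mem _, hσG, fun i j => ?_⟩, fun j => (hc j).1, fun i hi => by omega⟩
      simpa using hσe j i
    | succ N ih =>
      obtain ⟨θ', hRel, hcols, hrows⟩ := ih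
      by_cases hN : N < n
      · set iN : Fin n := ⟨N, hN⟩ with hiNdef
        obtain ⟨c', ⟨hc'Φ, σ, hσH, hσP, hσe⟩, -⟩ :=
          hΦ (Pt θ' iN) (Pt_equiv θ' iN) (fun j => θ' iN j)
        set θ2 : Fin n → Fin m → Bool := fun k j => θ' k (σ⁻¹ j) with hθ2
        have hrowslt : ∀ k : Fin n, k < iN → ∀ j, θ2 k j = θ' k j := by
          intro k hk j
          have := hσP (σ⁻¹ j) k hk
          simpa [hθ2] using this.symm
        have hPeq : ∀ i : Fin n, i ≤ iN → Pt θ2 i = Pt θ' i := by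
          intro i hi
          funext j j'
          refine propext ⟨fun hp k hk => ?_, fun hp k hk => ?_⟩
          · rw [← hrowslt k (lt_of_lt_of_le hk hi) j, ← hrowslt k (lt_of_lt_of_le hk hi) j']
            exact hp k hk
          · rw [hrowslt k (lt_of_lt_of_le hk hi) j, hrowslt k (lt_of_lt_of_le hk hi) j']
            exact hp k hk
        have hRel2 : Rel G H θ2 θ' :=
          ⟨σ, fun _ => 1, hσH, fun _ => one_mem _, fun i j => by simp [hθ2]⟩
        refine ⟨θ2, hRel2.trans hRel, fun j => hcols (σ⁻¹ j), ?_⟩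
        intro i hi
        rcases Nat.lt_succ_iff_lt_or_eq.mp hi with hc | hc
        · have hiN : i < iN := Fin.lt_def.mpr hc
          have hrw : (fun j => θ2 i j) = fun j => θ' i j := funext (hrowslt i hiN)
          rw [hrw, hPeq i hiN.le]
          exact hrows i hc
        · have hieq : i = iN := Fin.ext hc
          subst hieq
          have hrw : (fun j => θ2 iN j) = c' := by
            funext j
            simpa [hθ2] using (hσe (σ⁻¹ j)).symm
          rw [hrw, hPeq iN le_rfl]
          exact hc'Φ
      · refine ⟨θ', hRel, hcols, fun i hi => hrows i ?_⟩
        have := i.isLt; omega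
  obtain ⟨θc, hRelc, hcolsc, hrowsc⟩ := exist n
  refine ⟨θc, ⟨⟨hcolsc, fun i => hrowsc i i.isLt⟩, hRelc⟩, ?_⟩
  rintro y ⟨⟨hycols, hyrows⟩, hyrel⟩
  have hyRel : Rel G H y θc := Rel.trans hyrel hRelc.symm
  obtain ⟨h, hH, hcol⟩ := colstep y θc hyRel hcolsc hycols
  have main : ∀ N : ℕ, ∀ k : Fin n, (k : ℕ) < N → ∀ j, y k j = θc k j := by
    intro N
    induction N with
    | zero => intro k hk; omega
    | succ N ih =>
      intro k hk j
      rcases Nat.lt_succ_iff_lt_or_eq.mp hk with hc | hc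
      · exact ih k hc j
      · have hbelow : ∀ k' : Fin n, k' < k → ∀ j, y k' j = θc k' j := by
          intro k' hk' j
          exact ih k' (by rw [← hc]; exact Fin.lt_def.mp hk') j
        have hPeq : Pt y k = Pt θc k := by
          funext j j'
          refine propext ⟨fun hp k' hk' => ?_, fun hp k' hk' => ?_⟩
          · rw [← hbelow k' hk' j, ← hbelow k' hk' j']; exact hp k' hk'
          · rw [hbelow k' hk' j, hbelow k' hk' j']; exact hp k' hk'
        have hP' : ∀ j, Pt θc k (h j) j := by
          intro j k' hk'
          exact (hbelow k' hk' (h j)).symm.trans (hcol k' j)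
        have h1 : (fun j => θc k j) ∈ Φ (Pt θc k) := hrowsc k k.isLt
        have h2 : (fun j => y k j) ∈ Φ (Pt θc k) := by
          rw [← hPeq]; exact hyrows k
        have huniq := (hΦ (Pt θc k) (Pt_equiv θc k) (fun j => θc k j)).unique
          ⟨h2, h, hH, hP', fun j => hcol k j⟩
          ⟨h1, 1, one_mem _, fun j => (Pt_equiv θc k).refl j, fun j => rfl⟩
        exact congrFun huniq j
  funext k j
  exact main n k k.isLt j
end

section
/- Fix an integer t ≥ 2. For a finite simple graph Γ on vertex set Fin n, define the t-uniform hypergraph R_Γ on the vertex set Fin n ⊕ Fin t as follows, writing v_1, …, v_{t−2}, a, b for the t vertices of the second summand (so for t = 2 there are no vertices v_i, only a and b): the hyperedges of R_Γ are (i) {u, w, v₁, …, v_{t−2}} for every edge {u, w} of Γ, (ii) {u, v₁, …, v_{t−2}, a} for every non-isolated vertex u of Γ, and (iii) the single hyperedge {v₁, …, v_{t−2}, a, b}. Then for any two finite simple graphs Γ and Δ on vertex set Fin n, each containing at least one edge, Γ and Δ are isomorphic if and only if R_Γ and R_Δ are isomorphic as hypergraphs, i.e., there exists a bijection φ of Fin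 n ⊕ Fin t to itself mapping the set of hyperedges of R_Γ onto the set of hyperedges of R_Δ. -/
/-- The `t - 2` "bogus" vertices `v₁, …, v_{t-2}` of the second summand. -/
def bogusV (n t : ℕ) : Finset (Fin n ⊕ Fin t) :=
  (Finset.univ.filter (fun i : Fin t => (i : ℕ) < t - 2)).image Sum.inr

/-- The bogus vertex `a`. -/
def vertA (n t : ℕ) (ht : 2 ≤ t) : Fin n ⊕ Fin t :=
  Sum.inr ⟨t - 2, by omega⟩

/-- The bogus vertex `b`. -/
def vertB (n t : ℕ) (ht : 2 ≤ t) : Fin n ⊕ Fin t :=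
  Sum.inr ⟨t - 1, by omega⟩

/-- The `t`-uniform hypergraph `R_Γ` on `Fin n ⊕ Fin t` associated to a simple graph
`Γ` on `Fin n`: its hyperedges are `{u, w, v₁, …, v_{t-2}}` for every edge `{u, w}`
of `Γ`, `{u, v₁, …, v_{t-2}, a}` for every non-isolated vertex `u` of `Γ`, and the
single hyperedge `{v₁, …, v_{t-2}, a, b}`. -/
def RGamma (n t : ℕ) (ht : 2 ≤ t) (Γ : SimpleGraph (Fin n)) :
    Set (Finset (Fin n ⊕ Fin t)) :=
  {E | (∃ u w : Fin n, Γ.Adj u w ∧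
          E = insert (Sum.inl u) (insert (Sum.inl w) (bogusV n t)))
    ∨ (∃ u : Fin n, (∃ w : Fin n, Γ.Adj u w) ∧
          E = insert (Sum.inl u) (insert (vertA n t ht) (bogusV n t)))
    ∨ E = insert (vertA n t ht) (insert (vertB n t ht) (bogusV n t))}

variable {n t : ℕ}

lemma inl_not_bogus (u : Fin n) : (Sum.inl u : Fin n ⊕ Fin t) ∉ bogusV n t := by
  simp [bogusV]

lemma vertA_not_bogus (ht : 2 ≤ t) : vertA n t ht ∉ bogusV n t := by
  simp [bogusV, vertA, Fin.ext_iff]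
  omega

lemma vertB_not_bogus (ht : 2 ≤ t) : vertB n t ht ∉ bogusV n t := by
  simp [bogusV, vertB, Fin.ext_iff]
  omega

lemma vertA_ne_vertB (ht : 2 ≤ t) : vertA n t ht ≠ vertB n t ht := by
  simp [vertA, vertB, Fin.ext_iff]
  omega

lemma inl_ne_vertA (ht : 2 ≤ t) (u : Fin n) : (Sum.inl u : Fin n ⊕ Fin t) ≠ vertA n t ht := by
  simp [vertA]

lemma inl_ne_vertB (ht : 2 ≤ t) (u : Fin n) : (Sum.inl u : Fin n ⊕ Fin t) ≠ vertB n t ht := by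
  simp [vertB]

lemma inr_trichotomy (ht : 2 ≤ t) (j : Fin t) :
    (Sum.inr j : Fin n ⊕ Fin t) ∈ bogusV n t ∨ Sum.inr j = vertA n t ht ∨
      Sum.inr j = vertB n t ht := by
  have hj := j.isLt
  rcases lt_trichotomy (j : ℕ) (t - 2) with h | h | h
  · exact Or.inl (Finset.mem_image.2 ⟨j, Finset.mem_filter.2 ⟨Finset.mem_univ _, h⟩, rfl⟩)
  · exact Or.inr (Or.inl (by simp [vertA, Fin.ext_iff, h]))
  · exact Or.inr (Or.inr (by simp [vertB, Fin.ext_iff]; omega))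

variable {ht : 2 ≤ t} {Λ : SimpleGraph (Fin n)}

/-- shorthand notations (just defs) -/
def eI (n t : ℕ) (u w : Fin n) : Finset (Fin n ⊕ Fin t) :=
  insert (Sum.inl u) (insert (Sum.inl w) (bogusV n t))

def eII (n t : ℕ) (ht : 2 ≤ t) (u : Fin n) : Finset (Fin n ⊕ Fin t) :=
  insert (Sum.inl u) (insert (vertA n t ht) (bogusV n t))

def eIII (n t : ℕ) (ht : 2 ≤ t) : Finset (Fin n ⊕ Fin t) :=
  insert (vertA n t ht) (insert (vertB n t ht) (bogusV n t))

lemma mem_RGamma_iff {E : Finset (Fin n ⊕ Fin t)} :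
    E ∈ RGamma n t ht Λ ↔
      (∃ u w : Fin n, Λ.Adj u w ∧ E = eI n t u w)
      ∨ (∃ u : Fin n, (∃ w : Fin n, Λ.Adj u w) ∧ E = eII n t ht u)
      ∨ E = eIII n t ht := Iff.rfl

lemma vertB_not_mem_eI (u w : Fin n) : vertB n t ht ∉ eI n t u w := by
  simp [eI, (inl_ne_vertB ht u).symm, (inl_ne_vertB ht w).symm, vertB_not_bogus ht]

lemma vertB_not_mem_eII (u : Fin n) : vertB n t ht ∉ eII n t ht u := by
  simp [eII, (inl_ne_vertB ht u).symm, (vertA_ne_vertB ht).symm, vertB_not_bogus ht]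

lemma vertA_not_mem_eI (u w : Fin n) : vertA n t ht ∉ eI n t u w := by
  simp [eI, (inl_ne_vertA ht u).symm, (inl_ne_vertA ht w).symm, vertA_not_bogus ht]

lemma inl_mem_eI_iff {x u w : Fin n} : (Sum.inl x : Fin n ⊕ Fin t) ∈ eI n t u w ↔ x = u ∨ x = w := by
  simp [eI, inl_not_bogus]

lemma inl_mem_eII_iff {x u : Fin n} : (Sum.inl x : Fin n ⊕ Fin t) ∈ eII n t ht u ↔ x = u := by
  simp [eII, inl_ne_vertA ht, inl_not_bogus]

lemma inl_not_mem_eIII (x : Fin n) : (Sum.inl x : Fin n ⊕ Fin t) ∉ eIII n t ht := by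
  simp [eIII, inl_ne_vertA ht, inl_ne_vertB ht, inl_not_bogus]

lemma bogus_subset_of_mem {E : Finset (Fin n ⊕ Fin t)} (hE : E ∈ RGamma n t ht Λ) :
    bogusV n t ⊆ E := by
  rcases hE with ⟨u, w, _, rfl⟩ | ⟨u, _, rfl⟩ | rfl <;>
    · intro x hx
      simp [hx]

lemma eIII_mem : eIII n t ht ∈ RGamma n t ht Λ := Or.inr (Or.inr rfl)

lemma eq_eIII_of_vertB_mem {E : Finset (Fin n ⊕ Fin t)} (hE : E ∈ RGamma n t ht Λ)
    (hb : vertB n t ht ∈ E) : E = eIII n t ht := by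
  rcases hE with ⟨u, w, _, rfl⟩ | ⟨u, _, rfl⟩ | rfl
  · exact absurd hb (vertB_not_mem_eI u w)
  · exact absurd hb (vertB_not_mem_eII u)
  · rfl

lemma mem_bogus_of_mem_all (hΛ : ∃ u w, Λ.Adj u w) {v : Fin n ⊕ Fin t}
    (h : ∀ E ∈ RGamma n t ht Λ, v ∈ E) : v ∈ bogusV n t := by
  obtain ⟨u, w, huw⟩ := hΛ
  have h1 : v ∈ eI n t u w := h _ (Or.inl ⟨u, w, huw, rfl⟩)
  have h3 : v ∈ eIII n t ht := h _ eIII_mem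
  rcases Finset.mem_insert.1 h3 with rfl | h3
  · exact absurd h1 (vertA_not_mem_eI u w)
  rcases Finset.mem_insert.1 h3 with rfl | h3
  · exact absurd h1 (vertB_not_mem_eI u w)
  · exact h3

lemma unique_vertB (hΛ : ∃ u w, Λ.Adj u w) {v : Fin n ⊕ Fin t}
    (h : ∃ E, E ∈ RGamma n t ht Λ ∧ v ∈ E ∧ ∀ E' ∈ RGamma n t ht Λ, v ∈ E' → E' = E) :
    v = vertB n t ht := by
  obtain ⟨u₀, w₀, h₀⟩ := hΛ
  obtain ⟨E, hE, hv, huniq⟩ := h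
  by_contra hne
  -- we produce two distinct hyperedges containing v
  obtain ⟨E₁, E₂, hE₁, hE₂, hv₁, hv₂, hEne⟩ :
      ∃ E₁ E₂, E₁ ∈ RGamma n t ht Λ ∧ E₂ ∈ RGamma n t ht Λ ∧ v ∈ E₁ ∧ v ∈ E₂ ∧ E₁ ≠ E₂ := by
    rcases v with x | j
    · -- v = inl x : x is non-isolated
      have hni : ∃ w, Λ.Adj x w := by
        rcases hE with ⟨u, w, huw, rfl⟩ | ⟨u, hu, rfl⟩ | rfl
        · rcases inl_mem_eI_iff.1 hv with rfl | rfl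
          · exact ⟨w, huw⟩
          · exact ⟨u, huw.symm⟩
        · rcases inl_mem_eII_iff.1 hv with rfl
          exact hu
        · exact absurd hv (inl_not_mem_eIII x)
      obtain ⟨w, hw⟩ := hni
      refine ⟨eI n t x w, eII n t ht x, Or.inl ⟨x, w, hw, rfl⟩, Or.inr (Or.inl ⟨x, ⟨w, hw⟩, rfl⟩),
        inl_mem_eI_iff.2 (Or.inl rfl), inl_mem_eII_iff.2 rfl, ?_⟩
      intro hcontra
      have : vertA n t ht ∈ eI n t x w := by
        rw [hcontra]; simp [eII]
      exact vertA_not_mem_eI x w this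
    · rcases inr_trichotomy ht j with hj | hj | hj
      · refine ⟨eI n t u₀ w₀, eIII n t ht, Or.inl ⟨u₀, w₀, h₀, rfl⟩, eIII_mem, ?_, ?_, ?_⟩
        · exact bogus_subset_of_mem (ht := ht) (Λ := Λ) (Or.inl ⟨u₀, w₀, h₀, rfl⟩) hj
        · exact bogus_subset_of_mem (Λ := Λ) eIII_mem hj
        · intro hcontra
          have : vertB n t ht ∈ eI n t u₀ w₀ := by rw [hcontra]; simp [eIII]
          exact vertB_not_mem_eI u₀ w₀ this
      · refine ⟨eII n t ht u₀, eIII n t ht, Or.inr (Or.inl ⟨u₀, ⟨w₀, h₀⟩, rfl⟩), eIII_mem,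
          ?_, ?_, ?_⟩
        · rw [hj]; simp [eII]
        · rw [hj]; simp [eIII]
        · intro hcontra
          have : vertB n t ht ∈ eII n t ht u₀ := by rw [hcontra]; simp [eIII]
          exact vertB_not_mem_eII u₀ this
      · exact absurd hj hne
  have e1 := huniq E₁ hE₁ hv₁
  have e2 := huniq E₂ hE₂ hv₂
  exact hEne (e1.trans e2.symm)

lemma exists_unique_vertB (_hΛ : ∃ u w, Λ.Adj u w) :
    ∃ E, E ∈ RGamma n t ht Λ ∧ vertB n t ht ∈ E ∧
      ∀ E' ∈ RGamma n t ht Λ, vertB n t ht ∈ E' → E' = E :=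
  ⟨eIII n t ht, eIII_mem, by simp [eIII], fun E' hE' hb => eq_eIII_of_vertB_mem hE' hb⟩


/-- For any fixed `t ≥ 2` and any two simple graphs `Γ`, `Δ` on
`Fin n`, each with at least one edge, `Γ` and `Δ` are isomorphic if and only if the
`t`-uniform hypergraphs `R_Γ` and `R_Δ` are isomorphic, i.e., some permutation `φ` of
`Fin n ⊕ Fin t` maps the hyperedge set of `R_Γ` onto that of `R_Δ`. -/
theorem graph_iso_iff_hypergraph_iso (n t : ℕ) (ht : 2 ≤ t)
    (Γ Δ : SimpleGraph (Fin n))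
    (hΓ : ∃ u w : Fin n, Γ.Adj u w) (hΔ : ∃ u w : Fin n, Δ.Adj u w) :
    Nonempty (Γ ≃g Δ) ↔
      ∃ φ : Equiv.Perm (Fin n ⊕ Fin t),
        (fun E : Finset (Fin n ⊕ Fin t) => E.image φ) '' RGamma n t ht Γ =
          RGamma n t ht Δ := by
  constructor
  · rintro ⟨f⟩
    refine ⟨Equiv.sumCongr f.toEquiv (Equiv.refl (Fin t)), ?_⟩
    set φ : Equiv.Perm (Fin n ⊕ Fin t) := Equiv.sumCongr f.toEquiv (Equiv.refl (Fin t)) with hφ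
    have hφl : ∀ u : Fin n, φ (Sum.inl u) = Sum.inl (f u) := fun u => rfl
    have hφr : ∀ j : Fin t, φ (Sum.inr j) = Sum.inr j := fun j => rfl
    have hVimg : (bogusV n t).image φ = bogusV n t := by
      unfold bogusV
      rw [Finset.image_image]
      exact Finset.image_congr fun x _ => rfl
    have himgI : ∀ u w : Fin n, (eI n t u w).image φ = eI n t (f u) (f w) := by
      intro u w
      simp only [eI, Finset.image_insert, hVimg, hφl]
    have himgII : ∀ u : Fin n, (eII n t ht u).image φ = eII n t ht (f u) := by
      intro u
      simp only [eII, Finset.image_insert, hVimg, hφl, vertA, hφr]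
    have himgIII : (eIII n t ht).image φ = eIII n t ht := by
      simp only [eIII, Finset.image_insert, hVimg, vertA, vertB, hφr]
    ext E'
    constructor
    · rintro ⟨E, hE, rfl⟩
      show Finset.image (⇑φ) E ∈ RGamma n t ht Δ
      rcases hE with ⟨u, w, huw, rfl⟩ | ⟨u, ⟨w, huw⟩, rfl⟩ | rfl
      · rw [show insert (Sum.inl u) (insert (Sum.inl w) (bogusV n t)) = eI n t u w from rfl,
          himgI]
        exact Or.inl ⟨f u, f w, f.map_adj_iff.2 huw, rfl⟩
      · rw [show insert (Sum.inl u) (insert (vertA n t ht) (bogusV n t)) = eII n t ht u from rfl,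
          himgII]
        exact Or.inr (Or.inl ⟨f u, ⟨f w, f.map_adj_iff.2 huw⟩, rfl⟩)
      · rw [show insert (vertA n t ht) (insert (vertB n t ht) (bogusV n t)) = eIII n t ht from rfl,
          himgIII]
        exact Or.inr (Or.inr rfl)
    · intro hE'
      rcases hE' with ⟨u', w', h', rfl⟩ | ⟨u', ⟨w', h'⟩, rfl⟩ | rfl
      · refine ⟨eI n t (f.symm u') (f.symm w'), Or.inl ⟨f.symm u', f.symm w', ?_, rfl⟩, ?_⟩
        · have := f.symm.map_adj_iff.2 h'
          simpa using this
        · show Finset.image (⇑φ) (eI n t (f.symm u') (f.symm w')) = _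
          rw [himgI]
          simp [eI]
      · refine ⟨eII n t ht (f.symm u'), Or.inr (Or.inl ⟨f.symm u', ⟨f.symm w', ?_⟩, rfl⟩), ?_⟩
        · have := f.symm.map_adj_iff.2 h'
          simpa using this
        · show Finset.image (⇑φ) (eII n t ht (f.symm u')) = _
          rw [himgII]
          simp [eII]
      · exact ⟨eIII n t ht, eIII_mem, himgIII⟩

  · rintro ⟨φ, h⟩
    have stepA : ∀ E ∈ RGamma n t ht Γ, E.image φ ∈ RGamma n t ht Δ := by
      intro E hE
      rw [← h]
      exact ⟨E, hE, rfl⟩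
    have stepA' : ∀ E' ∈ RGamma n t ht Δ, ∃ E, E ∈ RGamma n t ht Γ ∧ E.image φ = E' := by
      intro E' hE'
      rw [← h] at hE'
      obtain ⟨E, hE, hEq⟩ := hE'
      exact ⟨E, hE, hEq⟩
    have stepB : ∀ v ∈ bogusV n t, φ v ∈ bogusV n t := by
      intro v hv
      apply mem_bogus_of_mem_all hΔ
      intro E' hE'
      obtain ⟨E, hE, rfl⟩ := stepA' E' hE'
      exact Finset.mem_image_of_mem φ (bogus_subset_of_mem hE hv)
    have hVimg : (bogusV n t).image φ = bogusV n t := by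
      apply Finset.eq_of_subset_of_card_le
      · intro x hx
        obtain ⟨v, hv, rfl⟩ := Finset.mem_image.1 hx
        exact stepB v hv
      · rw [Finset.card_image_of_injective _ φ.injective]
    have hVmem : ∀ v, φ v ∈ bogusV n t → v ∈ bogusV n t := by
      intro v hv
      rw [← hVimg] at hv
      obtain ⟨x, hx, hxe⟩ := Finset.mem_image.1 hv
      rwa [← φ.injective hxe]
    have hb : φ (vertB n t ht) = vertB n t ht := by
      apply unique_vertB hΔ
      obtain ⟨E, hE, hv, huniq⟩ := exists_unique_vertB (ht := ht) hΓ
      refine ⟨E.image φ, stepA E hE, Finset.mem_image_of_mem φ hv, ?_⟩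
      intro E' hE' hv'
      obtain ⟨E'', hE'', rfl⟩ := stepA' E' hE'
      obtain ⟨x, hx, hxe⟩ := Finset.mem_image.1 hv'
      rw [φ.injective hxe] at hx
      rw [huniq E'' hE'' hx]
    have hIII : (eIII n t ht).image φ = eIII n t ht := by
      apply eq_eIII_of_vertB_mem (stepA _ eIII_mem)
      rw [← hb]
      exact Finset.mem_image_of_mem φ (by simp [eIII])
    have ha : φ (vertA n t ht) = vertA n t ht := by
      have hmem : φ (vertA n t ht) ∈ eIII n t ht := by
        rw [← hIII]
        exact Finset.mem_image_of_mem φ (by simp [eIII])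
      rcases Finset.mem_insert.1 hmem with h1 | h1
      · exact h1
      rcases Finset.mem_insert.1 h1 with h1 | h1
      · exact absurd (φ.injective (h1.trans hb.symm)) (vertA_ne_vertB ht)
      · exact absurd (hVmem _ h1) (vertA_not_bogus ht)
    have hinl : ∀ u : Fin n, ∃ u' : Fin n, φ (Sum.inl u) = Sum.inl u' := by
      intro u
      rcases hu : φ (Sum.inl u) with x | j
      · exact ⟨x, rfl⟩
      · exfalso
        rcases inr_trichotomy (n := n) ht j with hj | hj | hj
        · exact inl_not_bogus u (hVmem _ (by rw [hu]; exact hj))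
        · exact (inl_ne_vertA ht u) (φ.injective (by rw [hu, hj, ha]))
        · exact (inl_ne_vertB ht u) (φ.injective (by rw [hu, hj, hb]))
    choose f hf using hinl
    have hfinj : Function.Injective f := by
      intro u w huw
      have h2 : φ (Sum.inl u) = φ (Sum.inl w) := by rw [hf u, hf w, huw]
      exact Sum.inl.inj (φ.injective h2)
    have himgI : ∀ u w : Fin n, (eI n t u w).image φ = eI n t (f u) (f w) := by
      intro u w
      simp only [eI, Finset.image_insert, hVimg, hf]
    have hadj : ∀ u w : Fin n, Γ.Adj u w → Δ.Adj (f u) (f w) := by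
      intro u w huw
      have hfne : f u ≠ f w := fun hc => huw.ne (hfinj hc)
      have hmem : eI n t (f u) (f w) ∈ RGamma n t ht Δ := by
        rw [← himgI u w]
        exact stepA _ (Or.inl ⟨u, w, huw, rfl⟩)
      rcases hmem with ⟨u', w', h', heq⟩ | ⟨u', _, heq⟩ | heq
      · have h1 : (Sum.inl (f u) : Fin n ⊕ Fin t) ∈ eI n t u' w' := by
          rw [show eI n t u' w' = insert (Sum.inl u') (insert (Sum.inl w') (bogusV n t)) from rfl,
            ← heq]
          simp [eI]
        have h2 : (Sum.inl (f w) : Fin n ⊕ Fin t) ∈ eI n t u' w' := by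
          rw [show eI n t u' w' = insert (Sum.inl u') (insert (Sum.inl w') (bogusV n t)) from rfl,
            ← heq]
          simp [eI]
        rcases inl_mem_eI_iff.1 h1 with e1 | e1 <;> rcases inl_mem_eI_iff.1 h2 with e2 | e2
        · exact absurd (e1.trans e2.symm) hfne
        · rw [e1, e2]; exact h'
        · rw [e1, e2]; exact h'.symm
        · exact absurd (e1.trans e2.symm) hfne
      · have h1 : (Sum.inl (f u) : Fin n ⊕ Fin t) ∈ eII n t ht u' := by
          rw [show eII n t ht u' = insert (Sum.inl u') (insert (vertA n t ht) (bogusV n t)) from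
            rfl, ← heq]
          simp [eI]
        have h2 : (Sum.inl (f w) : Fin n ⊕ Fin t) ∈ eII n t ht u' := by
          rw [show eII n t ht u' = insert (Sum.inl u') (insert (vertA n t ht) (bogusV n t)) from
            rfl, ← heq]
          simp [eI]
        rw [inl_mem_eII_iff] at h1 h2
        exact absurd (h1.trans h2.symm) hfne
      · have h1 : (Sum.inl (f u) : Fin n ⊕ Fin t) ∈ eIII n t ht := by
          rw [show eIII n t ht = insert (vertA n t ht) (insert (vertB n t ht) (bogusV n t)) from
            rfl, ← heq]
          simp [eI]
        exact absurd h1 (inl_not_mem_eIII (f u))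
    have hadj' : ∀ u w : Fin n, Δ.Adj (f u) (f w) → Γ.Adj u w := by
      intro u w hfw
      have hne : u ≠ w := fun hc => hfw.ne (by rw [hc])
      obtain ⟨E, hE, hEq⟩ := stepA' (eI n t (f u) (f w)) (Or.inl ⟨f u, f w, hfw, rfl⟩)
      have hu : (Sum.inl u : Fin n ⊕ Fin t) ∈ E := by
        have hmm : φ (Sum.inl u) ∈ E.image φ := by
          rw [hEq, hf]
          simp [eI]
        obtain ⟨x, hx, hxe⟩ := Finset.mem_image.1 hmm
        rwa [← φ.injective hxe]
      have hw : (Sum.inl w : Fin n ⊕ Fin t) ∈ E := by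
        have hmm : φ (Sum.inl w) ∈ E.image φ := by
          rw [hEq, hf]
          simp [eI]
        obtain ⟨x, hx, hxe⟩ := Finset.mem_image.1 hmm
        rwa [← φ.injective hxe]
      rcases hE with ⟨u₁, w₁, h₁, rfl⟩ | ⟨u₁, _, rfl⟩ | rfl
      · rcases inl_mem_eI_iff.1 hu with e1 | e1 <;> rcases inl_mem_eI_iff.1 hw with e2 | e2
        · exact absurd (e1.trans e2.symm) hne
        · rw [e1, e2]; exact h₁
        · rw [e1, e2]; exact h₁.symm
        · exact absurd (e1.trans e2.symm) hne
      · exact absurd ((inl_mem_eII_iff.1 hu).trans (inl_mem_eII_iff.1 hw).symm) hne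
      · exact absurd hu (inl_not_mem_eIII u)
    have hfbij : Function.Bijective f := Finite.injective_iff_bijective.1 hfinj
    exact ⟨⟨Equiv.ofBijective f hfbij, fun {u w} => ⟨hadj' u w, hadj u w⟩⟩⟩
end
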